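/- arXiv:2006.02643 — 2 statements merged into one kernel-verified Lean document; each statement's English description precedes it below -/
import Mathlib

section
/- For any sequence z^N over an m-ary alphabet with symbol counts N_1,...,N_m summing to N, and any probability vector (θ_1,...,θ_m), the Laplace probability assignment satisfies log(1/q_L(z^N)) ≤ m·log(2eN) + Σ_{i=1}^m N_i·log(1/θ_i), where q_L(z^N) = (N_1!···N_m!/N!)·(1/binom(N+m-1,m-1)). -/
/-!
The reciprocal of the Laplace assignment is the product of the multinomial coefficient
`N! / ∏ N_i!` and `binom(N+m-1, m-1)`. The multinomial coefficient times `∏ θ_i ^ N_i` is a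
single term of the expansion of `(∑ θ_i) ^ N = 1`, which bounds it by `∏ θ_i ^ (-N_i)`; and
`binom(N+m-1, m-1) ≤ (N+1)^(m-1) ≤ (2eN)^m`.
-/

open Finset Real

theorem Nat.multinomial_mul_prod_pow_le_one {ι : Type*} [Fintype ι] [DecidableEq ι] (k : ι → ℕ)
    {θ : ι → ℝ} (hθ0 : ∀ i, 0 ≤ θ i) (hθ1 : ∑ i, θ i = 1) :
    (Nat.multinomial univ k : ℝ) * ∏ i, θ i ^ k i ≤ 1 :=
  calc (Nat.multinomial univ k : ℝ) * ∏ i, θ i ^ k i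
      ≤ ∑ k' ∈ piAntidiag univ (∑ i, k i), (Nat.multinomial univ k' : ℝ) * ∏ i, θ i ^ k' i :=
        single_le_sum (f := fun k' ↦ (Nat.multinomial univ k' : ℝ) * ∏ i, θ i ^ k' i)
          (fun k' _ ↦ mul_nonneg (Nat.cast_nonneg _) (prod_nonneg fun i _ ↦ pow_nonneg (hθ0 i) _))
          (by simp [mem_piAntidiag])
    _ = (∑ i, θ i) ^ (∑ i, k i) := (sum_pow_eq_sum_piAntidiag _ _ _).symm
    _ = 1 := by rw [hθ1, one_pow]

theorem Real.logb_multinomial_le {ι : Type*} [Fintype ι] [DecidableEq ι] {b : ℝ} (hb : 1 < b)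
    (k : ι → ℕ) {θ : ι → ℝ} (hθ0 : ∀ i, 0 ≤ θ i) (hθ1 : ∑ i, θ i = 1)
    (hθpos : ∀ i, k i ≠ 0 → 0 < θ i) :
    logb b (Nat.multinomial univ k) ≤ ∑ i, (k i : ℝ) * logb b (1 / θ i) := by
  have hpow_pos (i : ι) : 0 < θ i ^ k i := by
    rcases eq_or_ne (k i) 0 with h | h
    · simp [h]
    · exact pow_pos (hθpos i h) _
  have hprod_pos : 0 < ∏ i, θ i ^ k i := prod_pos fun i _ ↦ hpow_pos i
  calc logb b (Nat.multinomial univ k)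
      ≤ logb b (∏ i, θ i ^ k i)⁻¹ := by
        refine logb_le_logb_of_le hb (by exact_mod_cast Nat.multinomial_pos _ _) ?_
        rw [← one_div, le_div_iff₀ hprod_pos]
        exact Nat.multinomial_mul_prod_pow_le_one k hθ0 hθ1
    _ = ∑ i, (k i : ℝ) * logb b (1 / θ i) := by
        simp only [logb_inv, logb_prod _ _ fun i _ ↦ (hpow_pos i).ne', logb_pow, one_div,
          mul_neg, sum_neg_distrib]

theorem Nat.choose_add_sub_one_le_add_one_pow (n m : ℕ) :
    (n + m - 1).choose (m - 1) ≤ (n + 1) ^ m := by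
  cases m with
  | zero => simp
  | succ k =>
    calc (n + (k + 1) - 1).choose (k + 1 - 1) = (n + k).choose k := by simp [← add_assoc]
      _ ≤ (n + 1) ^ k := Nat.choose_add_le_add_one_pow n k
      _ ≤ (n + 1) ^ (k + 1) := Nat.pow_le_pow_right n.succ_pos k.le_succ

theorem one_div_prod_factorial_div_factorial_mul_one_div {ι : Type*} [Fintype ι] (k : ι → ℕ)
    (c : ℝ) :
    1 / (((∏ i, (k i).factorial : ℕ) : ℝ) / ((∑ i, k i).factorial : ℝ) * (1 / c))
      = Nat.multinomial univ k * c := by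
  have hspec : (((∏ i, (k i).factorial : ℕ) : ℝ) * Nat.multinomial univ k)
      = ((∑ i, k i).factorial : ℝ) := by
    exact_mod_cast Nat.multinomial_spec univ k
  have : ((∏ i, (k i).factorial : ℕ) : ℝ) ≠ 0 := by positivity
  rw [← hspec]
  field_simp

theorem Real.logb_choose_add_sub_one_le {b : ℝ} (hb : 1 < b) {n : ℕ} (hn : 0 < n) (m : ℕ) :
    logb b ((n + m - 1).choose (m - 1)) ≤ m * logb b (2 * exp 1 * n) := by
  have hn_succ : (n : ℝ) + 1 ≤ 2 * exp 1 * n := by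
    have : (1 : ℝ) ≤ n := by exact_mod_cast hn
    nlinarith [add_one_le_exp (1 : ℝ)]
  calc logb b ((n + m - 1).choose (m - 1))
      ≤ logb b (((n : ℝ) + 1) ^ m) :=
        logb_le_logb_of_le hb (by exact_mod_cast Nat.choose_pos (by omega))
          (by exact_mod_cast Nat.choose_add_sub_one_le_add_one_pow n m)
    _ ≤ m * logb b (2 * exp 1 * n) := by
        rw [logb_pow]
        exact mul_le_mul_of_nonneg_left
          (logb_le_logb_of_le hb (by positivity) hn_succ) m.cast_nonneg

theorem laplace_pointwise_length_bound_general (m : ℕ) (Nc : Fin m → ℕ)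
    (N : ℕ) (hN : 0 < N) (hsum : ∑ i, Nc i = N)
    (θ : Fin m → ℝ) (hθ0 : ∀ i, 0 ≤ θ i) (hθ1 : ∑ i, θ i = 1)
    (hθpos : ∀ i, Nc i ≠ 0 → 0 < θ i) :
    Real.logb 2 (1 /
        (((∏ i, Nat.factorial (Nc i) : ℕ) : ℝ) / (Nat.factorial N : ℝ)
          * (1 / (Nat.choose (N + m - 1) (m - 1) : ℝ))))
      ≤ (m : ℝ) * Real.logb 2 (2 * Real.exp 1 * N)
        + ∑ i, (Nc i : ℝ) * Real.logb 2 (1 / θ i) := by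
  have hq := one_div_prod_factorial_div_factorial_mul_one_div Nc ((N + m - 1).choose (m - 1))
  rw [hsum] at hq
  have hchoose_pos : 0 < (N + m - 1).choose (m - 1) := Nat.choose_pos (by omega)
  rw [hq, logb_mul (by exact_mod_cast (Nat.multinomial_pos _ _).ne') (by positivity),
    add_comm (logb _ _)]
  exact add_le_add (logb_choose_add_sub_one_le one_lt_two hN m)
    (logb_multinomial_le one_lt_two Nc hθ0 hθ1 hθpos)

/-- For any sequence with symbol counts `Nc` summing to `N` and any probability
vector `θ` (positive on symbols that actually occur), the Laplace probability assignment
satisfies `log(1/q_L(z^N)) ≤ m·log(2eN) + Σ_i N_i·log(1/θ_i)`. -/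
theorem laplace_pointwise_length_bound (m : ℕ) (hm : 2 ≤ m) (Nc : Fin m → ℕ)
    (N : ℕ) (hN : 0 < N) (hsum : ∑ i, Nc i = N)
    (θ : Fin m → ℝ) (hθ0 : ∀ i, 0 ≤ θ i) (hθ1 : ∑ i, θ i = 1)
    (hθpos : ∀ i, Nc i ≠ 0 → 0 < θ i) :
    Real.logb 2 (1 /
        (((∏ i, Nat.factorial (Nc i) : ℕ) : ℝ) / (Nat.factorial N : ℝ)
          * (1 / (Nat.choose (N + m - 1) (m - 1) : ℝ))))
      ≤ (m : ℝ) * Real.logb 2 (2 * Real.exp 1 * N)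
        + ∑ i, (Nc i : ℝ) * Real.logb 2 (1 / θ i) :=
  laplace_pointwise_length_bound_general m Nc N hN hsum θ hθ0 hθ1 hθpos
end

section
/- Let Z_1,...,Z_N be identically distributed (but arbitrarily correlated) random variables over an m-ary alphabet, m ≥ 2, and let q_KT be the KT mixture probability q_KT(z^N) = [(2N_1-1)!!···(2N_m-1)!!]/[m(m+2)···(m+2N-2)]. Then E[log(1/q_KT(Z^N))] ≤ (m/2)·log(e(1 + 2N/m)) + (1/2)·log(πN) + N·H(Z_1). -/
/-!
Let `G y = y/2 · log y - y/2`, an antiderivative of `log / 2`. Then `G (a + 2) - G a` is the mean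
of `log` over `[a, a + 2]`, so it lies between `log a` (monotonicity) and `log (a + 1)` (the
tangent line at the midpoint). Telescoping bounds the log of the denominator of `q_KT` above by
`G (m + 2N) - G m`, and `log (2k - 1)!!` below by `G (2k) = k log (2k) - k`. Together with
`N log (1 + m / 2N) ≤ m / 2` this gives, for every sequence `z` with symbol counts `c`,
`log (1 / q_KT z) ≤ (m/2) log (e (1 + 2N/m)) + N · H(c / N)`. Averaging over `z`, concavity of
`-x log x` bounds the mean empirical entropy by the entropy of the mean empirical distribution,
which is the common marginal.
-/

/-- Marginal distribution of coordinate `j` under a joint pmf `μ` on `Fin N → Fin m`. -/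
noncomputable def marg {m N : ℕ} (μ : (Fin N → Fin m) → ℝ) (j : Fin N) (i : Fin m) : ℝ :=
  ∑ z : Fin N → Fin m, if z j = i then μ z else 0

/-- `(2k-1)!! = 1·3·5⋯(2k-1)` as a real number, with `(-1)!! = 1`. -/
def doubleFactorialOdd (k : ℕ) : ℝ := ∏ j ∈ Finset.range k, (2 * (j : ℝ) + 1)

/-- The KT mixture probability `q_KT(z^N) = [(2N₁-1)!!⋯(2N_m-1)!!]/[m(m+2)⋯(m+2N-2)]`. -/
noncomputable def ktProb (m N : ℕ) (z : Fin N → Fin m) : ℝ :=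
  (∏ i : Fin m, doubleFactorialOdd ((Finset.univ.filter (fun t => z t = i)).card))
    / (∏ j ∈ Finset.range N, ((m : ℝ) + 2 * j))

open Real Finset intervalIntegral

lemma mul_log_sub_log_le_sub {x y : ℝ} (hx : 0 ≤ x) (hy : 0 < y) :
    x * (log y - log x) ≤ y - x := by
  rcases hx.eq_or_lt with rfl | hx
  · simpa using hy.le
  have h := log_le_sub_one_of_pos (div_pos hy hx)
  rw [log_div hy.ne' hx.ne'] at h
  calc x * (log y - log x) ≤ x * (y / x - 1) := by gcongr
    _ = y - x := by field_simp

lemma mul_negMulLog_div (c : ℝ) {n : ℝ} (hn : n ≠ 0) :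
    n * negMulLog (c / n) = c * log n - c * log c := by
  rw [div_eq_mul_inv, negMulLog_mul, negMulLog, negMulLog, log_inv]
  field_simp
  ring

lemma sum_mul_negMulLog_le {α : Type*} [Fintype α] {μ : α → ℝ} (hμ0 : ∀ a, 0 ≤ μ a)
    (hμ1 : ∑ a, μ a = 1) {f : α → ℝ} (hf : ∀ a, 0 ≤ f a) :
    ∑ a, μ a * negMulLog (f a) ≤ negMulLog (∑ a, μ a * f a) :=
  concaveOn_negMulLog.le_map_sum (fun a _ ↦ hμ0 a) hμ1 fun a _ ↦ hf a

noncomputable def halfLogAntideriv (y : ℝ) : ℝ := y / 2 * log y - y / 2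

lemma halfLogAntideriv_sub (a b : ℝ) :
    halfLogAntideriv b - halfLogAntideriv a = (∫ y in a..b, log y) / 2 := by
  rw [integral_log, halfLogAntideriv, halfLogAntideriv]
  ring

lemma log_le_halfLogAntideriv_add_two_sub {a : ℝ} (ha : 0 < a) :
    log a ≤ halfLogAntideriv (a + 2) - halfLogAntideriv a := by
  have h : ∫ _ in a..a + 2, log a ≤ ∫ y in a..a + 2, log y :=
    integral_mono_on (by linarith) intervalIntegrable_const
      intervalIntegrable_log' fun y hy ↦ log_le_log ha hy.1
  rw [halfLogAntideriv_sub]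
  simp only [integral_const, add_sub_cancel_left, smul_eq_mul] at h
  linarith

lemma halfLogAntideriv_add_two_sub_le_log {b : ℝ} (hb : 0 ≤ b) :
    halfLogAntideriv (b + 2) - halfLogAntideriv b ≤ log (b + 1) := by
  have hb1 : 0 < b + 1 := by linarith
  have htangent_int :
      IntervalIntegrable (fun y ↦ (y - (b + 1)) / (b + 1)) MeasureTheory.volume b (b + 2) :=
    (by fun_prop : Continuous _).intervalIntegrable _ _
  have hbelow : ∫ y in b..b + 2, log y
      ≤ ∫ y in b..b + 2, (log (b + 1) + (y - (b + 1)) / (b + 1)) := by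
    refine integral_mono_on_of_le_Ioo (by linarith) intervalIntegrable_log'
      (intervalIntegrable_const.add htangent_int) fun y hy ↦ ?_
    have hy0 : 0 < y := hb.trans_lt hy.1
    have := log_le_sub_one_of_pos (div_pos hy0 hb1)
    rw [log_div hy0.ne' hb1.ne'] at this
    linarith [show y / (b + 1) - 1 = (y - (b + 1)) / (b + 1) by field_simp]
  have htangent : ∫ y in b..b + 2, (log (b + 1) + (y - (b + 1)) / (b + 1)) = 2 * log (b + 1) := by
    rw [integral_add intervalIntegrable_const htangent_int, integral_div,
      integral_comp_sub_right fun y ↦ y, integral_id, integral_const, smul_eq_mul]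
    ring
  rw [halfLogAntideriv_sub]
  linarith

lemma sum_range_log_add_two_mul_le {a : ℝ} (ha : 0 < a) (n : ℕ) :
    ∑ j ∈ range n, log (a + 2 * j) ≤ halfLogAntideriv (a + 2 * n) - halfLogAntideriv a := by
  have htel := sum_range_sub (fun j : ℕ ↦ halfLogAntideriv (a + 2 * j)) n
  simp only [Nat.cast_zero, mul_zero, add_zero] at htel
  rw [← htel]
  gcongr with j
  push_cast
  rw [show a + 2 * ((j : ℝ) + 1) = a + 2 * j + 2 by ring]
  exact log_le_halfLogAntideriv_add_two_sub (by positivity)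

lemma halfLogAntideriv_two_mul (k : ℝ) :
    halfLogAntideriv (2 * k) = k * log k + k * (log 2 - 1) := by
  rcases eq_or_ne k 0 with rfl | hk
  · simp [halfLogAntideriv]
  · rw [halfLogAntideriv, log_mul two_ne_zero hk]
    ring

lemma halfLogAntideriv_two_mul_le_log_doubleFactorialOdd (k : ℕ) :
    halfLogAntideriv (2 * k) ≤ log (doubleFactorialOdd k) := by
  have htel := sum_range_sub (fun j : ℕ ↦ halfLogAntideriv (2 * j)) k
  simp only [Nat.cast_zero, mul_zero, show halfLogAntideriv 0 = 0 by simp [halfLogAntideriv],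
    sub_zero] at htel
  rw [← htel, doubleFactorialOdd, log_prod fun j _ ↦ by positivity]
  gcongr with j
  push_cast
  rw [show 2 * ((j : ℝ) + 1) = 2 * j + 2 by ring]
  exact halfLogAntideriv_add_two_sub_le_log (by positivity)

lemma doubleFactorialOdd_pos (k : ℕ) : 0 < doubleFactorialOdd k :=
  prod_pos fun _ _ ↦ by positivity

def symbolCount {ι α : Type*} [Fintype ι] [DecidableEq α] (z : ι → α) (a : α) : ℕ :=
  #{t | z t = a}

lemma sum_symbolCount {ι α : Type*} [Fintype ι] [Fintype α] [DecidableEq α] (z : ι → α) :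
    ∑ a, symbolCount z a = Fintype.card ι :=
  (card_eq_sum_card_fiberwise fun t _ ↦ mem_univ (z t)).symm

lemma sum_mul_symbolCount {m N : ℕ} (μ : (Fin N → Fin m) → ℝ) (i : Fin m) :
    ∑ z, μ z * symbolCount z i = ∑ t, marg μ t i := by
  simp only [symbolCount, card_filter, Nat.cast_sum, Nat.cast_ite, Nat.cast_one, Nat.cast_zero,
    mul_sum, mul_ite, mul_one, mul_zero, marg]
  exact sum_comm

lemma ktProb_eq {m N : ℕ} (z : Fin N → Fin m) :
    ktProb m N z
      = (∏ i, doubleFactorialOdd (symbolCount z i)) / ∏ j ∈ range N, ((m : ℝ) + 2 * j) :=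
  rfl

lemma log_one_div_ktProb {m N : ℕ} (hm : 0 < m) (z : Fin N → Fin m) :
    log (1 / ktProb m N z)
      = ∑ j ∈ range N, log ((m : ℝ) + 2 * j)
        - ∑ i, log (doubleFactorialOdd (symbolCount z i)) := by
  have hden : 0 < ∏ j ∈ range N, ((m : ℝ) + 2 * j) := prod_pos fun _ _ ↦ by positivity
  have hnum : 0 < ∏ i, doubleFactorialOdd (symbolCount z i) :=
    prod_pos fun _ _ ↦ doubleFactorialOdd_pos _
  rw [one_div, log_inv, ktProb_eq, log_div hnum.ne' hden.ne',
    log_prod fun i _ ↦ (doubleFactorialOdd_pos _).ne', log_prod fun j _ ↦ by positivity,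
    neg_sub]

lemma log_one_div_ktProb_le_halfLogAntideriv {m N : ℕ} (hm : 0 < m) (z : Fin N → Fin m) :
    log (1 / ktProb m N z) ≤ halfLogAntideriv (m + 2 * N) - halfLogAntideriv m
      - ∑ i, halfLogAntideriv (2 * symbolCount z i) := by
  rw [log_one_div_ktProb hm]
  gcongr ?_ - ?_
  · exact sum_range_log_add_two_mul_le (by positivity) N
  · exact sum_le_sum fun i _ ↦ halfLogAntideriv_two_mul_le_log_doubleFactorialOdd _

theorem log_one_div_ktProb_le {m N : ℕ} (hm : 0 < m) (hN : 0 < N) (z : Fin N → Fin m) :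
    log (1 / ktProb m N z)
      ≤ (m : ℝ) / 2 * log (exp 1 * (1 + 2 * N / m)) + 1 / 2 * log (π * N)
        + N * ∑ i, negMulLog (symbolCount z i / N) := by
  have hm0 : (0 : ℝ) < m := by exact_mod_cast hm
  have hN0 : (0 : ℝ) < N := by exact_mod_cast hN
  have hcount : ∑ i, (symbolCount z i : ℝ) = N := by
    exact_mod_cast (sum_symbolCount z).trans (Fintype.card_fin N)
  have hcount_log : ∑ i, halfLogAntideriv (2 * symbolCount z i)
      = ∑ i, (symbolCount z i : ℝ) * log (symbolCount z i) + N * (log 2 - 1) := by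
    simp only [halfLogAntideriv_two_mul]
    rw [sum_add_distrib, ← sum_mul, hcount]
  have hentropy : N * ∑ i, negMulLog (symbolCount z i / N)
      = N * log N - ∑ i, (symbolCount z i : ℝ) * log (symbolCount z i) := by
    simp only [mul_sum, mul_negMulLog_div _ hN0.ne']
    rw [sum_sub_distrib, ← sum_mul, hcount]
  have hratio :=
    mul_log_sub_log_le_sub (x := 2 * N) (y := m + 2 * N) (by positivity) (by positivity)
  have hexp : log (exp 1 * (1 + 2 * N / m)) = 1 + log (m + 2 * N) - log m := by
    rw [log_mul (exp_ne_zero 1) (by positivity), log_exp,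
      show (1 : ℝ) + 2 * N / m = (m + 2 * N) / m by field_simp, log_div (by positivity) hm0.ne']
    ring
  have hπN : 0 ≤ log (π * N) :=
    log_nonneg (by nlinarith [pi_gt_three, (show (1 : ℝ) ≤ N by exact_mod_cast hN)])
  have hmain := log_one_div_ktProb_le_halfLogAntideriv hm z
  rw [hcount_log] at hmain
  rw [log_mul two_ne_zero hN0.ne'] at hratio
  rw [hexp, hentropy]
  unfold halfLogAntideriv at hmain
  linarith

theorem sum_mul_log_one_div_ktProb_le {m N : ℕ} (hm : 0 < m) (hN : 0 < N)
    {μ : (Fin N → Fin m) → ℝ} (hμ0 : ∀ z, 0 ≤ μ z) (hμ1 : ∑ z, μ z = 1)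
    {p : Fin m → ℝ} (hp : ∀ t i, marg μ t i = p i) :
    ∑ z, μ z * log (1 / ktProb m N z)
      ≤ (m : ℝ) / 2 * log (exp 1 * (1 + 2 * N / m)) + 1 / 2 * log (π * N)
        + N * ∑ i, negMulLog (p i) := by
  set C := (m : ℝ) / 2 * log (exp 1 * (1 + 2 * N / m)) + 1 / 2 * log (π * N)
  have hN0 : (0 : ℝ) < N := by exact_mod_cast hN
  have hmean : ∀ i, ∑ z, μ z * (symbolCount z i / N : ℝ) = p i := fun i ↦ by
    simp only [mul_div_assoc', ← sum_div, sum_mul_symbolCount, hp, sum_const, card_univ,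
      Fintype.card_fin, nsmul_eq_mul]
    field_simp
  calc ∑ z, μ z * log (1 / ktProb m N z)
      ≤ ∑ z, μ z * (C + N * ∑ i, negMulLog (symbolCount z i / N)) :=
        sum_le_sum fun z _ ↦ mul_le_mul_of_nonneg_left (log_one_div_ktProb_le hm hN z) (hμ0 z)
    _ = C + N * ∑ i, ∑ z, μ z * negMulLog (symbolCount z i / N) := by
        simp only [mul_add, mul_left_comm _ (N : ℝ), mul_sum, sum_add_distrib, ← sum_mul, hμ1,
          one_mul]
        rw [sum_comm]
    _ ≤ C + N * ∑ i, negMulLog (p i) := by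
        gcongr with i
        rw [← hmean i]
        exact sum_mul_negMulLog_le hμ0 hμ1 fun z ↦ by positivity

/-- For identically distributed (but arbitrarily correlated) `Z_1,…,Z_N` over an
`m`-ary alphabet, `m ≥ 2`, the expected KT codelength satisfies
`E[log(1/q_KT(Z^N))] ≤ (m/2)·log(e(1+2N/m)) + (1/2)·log(πN) + N·H(Z_1)`. -/
theorem kt_expected_length_correlated (m N : ℕ) (hm : 2 ≤ m) (hN : 0 < N)
    (μ : (Fin N → Fin m) → ℝ) (hμ0 : ∀ z, 0 ≤ μ z) (hμ1 : ∑ z, μ z = 1)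
    (hid : ∀ j j' : Fin N, ∀ i : Fin m, marg μ j i = marg μ j' i) :
    ∑ z, μ z * Real.logb 2 (1 / ktProb m N z)
      ≤ ((m : ℝ) / 2) * Real.logb 2 (Real.exp 1 * (1 + 2 * N / m))
        + (1 / 2) * Real.logb 2 (Real.pi * N)
        + (N : ℝ) * (-∑ i : Fin m,
            marg μ ⟨0, hN⟩ i * Real.logb 2 (marg μ ⟨0, hN⟩ i)) := by
  have h := sum_mul_log_one_div_ktProb_le (by omega) hN hμ0 hμ1 (hid · ⟨0, hN⟩)
  simp only [negMulLog, neg_mul, sum_neg_distrib] at h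
  simp only [logb, mul_div_assoc', ← sum_div, ← neg_div]
  exact (div_le_div_of_nonneg_right h (log_nonneg one_le_two)).trans_eq (by ring)
end
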